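/- arXiv:2102.00995 — 2 statements merged into one kernel-verified Lean document; each statement's English description precedes it below -/
import Mathlib

section
/- Let X_1,…,X_N be vectors in ℝ^d, let K be odd and divide N, let B_1,…,B_K be an equipartition of {1,…,N} into blocks of size N/K, and let X̄_k = (K/N)·Σ_{i∈B_k} X_i. For μ ∈ ℝ^d let ℓ_μ(x) = ‖x−μ‖₂² and P_{B_k}h = (K/N)·Σ_{i∈B_k} h(X_i). Then for every μ ∈ ℝ^d, sup_{ν∈ℝ^d} Med( P_{B_k}(ℓ_μ − ℓ_ν) : k ∈ [K] ) = ( sup_{‖v‖₂=1} Med(⟨X̄_k − μ, v⟩ : k ∈ [K]) )². Consequently, the set of minimizers over μ ∈ ℝ^d of sup_{ν∈ℝ^d} Med(P_{B_k}(ℓ_μ − ℓ_ν)) equals the set of minimizers of μ ↦ sup_{‖v‖₂=1} Med(⟨X̄_k − μ, v⟩), i.e. the minmax MOM estimator is a minimizer of the convex function g*_{B_2^d}. -/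
open MeasureTheory ProbabilityTheory

noncomputable section

/-- `ℝ^d` as a Euclidean space. -/
abbrev EVec (d : ℕ) : Type := EuclideanSpace ℝ (Fin d)

/-- The pseudo-norm `‖x‖_S = sup_{v ∈ S} ⟨v, x⟩`. -/
def normS {d : ℕ} (S : Set (EVec d)) (x : EVec d) : ℝ :=
  ⨆ v : S, (inner ℝ (v : EVec d) x : ℝ)

/-- Application of a `d × d` matrix to a vector of `ℝ^d`, as a continuous linear map. -/
def mApply {d : ℕ} (A : Matrix (Fin d) (Fin d) ℝ) : EVec d →L[ℝ] EVec d :=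
  LinearMap.toContinuousLinearMap (Matrix.toEuclideanLin A)

/-- The standard Gaussian measure `N(0, I_d)` on `ℝ^d`. -/
def stdGaussian (d : ℕ) : Measure (EVec d) :=
  (Measure.pi fun _ : Fin d => gaussianReal 0 1).map
    (EuclideanSpace.equiv (Fin d) ℝ).symm

instance stdGaussian_isProb (d : ℕ) : IsProbabilityMeasure (stdGaussian d) :=
  Measure.isProbabilityMeasure_map
    ((EuclideanSpace.equiv (Fin d) ℝ).symm.continuous.measurable.aemeasurable)

/-- Gaussian mean width `ℓ*(T) = E sup_{t ∈ T} ⟨G, t⟩`, `G ~ N(0, I_d)`. -/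
def meanWidth {d : ℕ} (T : Set (EVec d)) : ℝ :=
  ∫ x, (⨆ t : T, (inner ℝ x (t : EVec d) : ℝ)) ∂(stdGaussian d)

/-- The Gaussian measure on `ℝ^d` that is the law of `μ + A G` for `G ~ N(0, I_d)`;
for `A = Σ^{1/2}` this is `N(μ, Σ)`. -/
def gaussianVec {d : ℕ} (μ : EVec d) (A : Matrix (Fin d) (Fin d) ℝ) :
    Measure (EVec d) :=
  (stdGaussian d).map fun x => μ + mApply A x

instance gaussianVec_isProb {d : ℕ} (μ : EVec d) (A : Matrix (Fin d) (Fin d) ℝ) :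
    IsProbabilityMeasure (gaussianVec μ A) :=
  Measure.isProbabilityMeasure_map
    ((continuous_const.add (mApply A).continuous).measurable.aemeasurable)

/-- Order statistics of a `K`-tuple of reals (`orderStat a k` is the `k`-th smallest). -/
def orderStat {K : ℕ} (a : Fin K → ℝ) : Fin K → ℝ := a ∘ Tuple.sort a

/-- The median of `K` reals: for odd `K` it is the `(K+1)/2`-th order statistic. -/
def med {K : ℕ} (a : Fin K → ℝ) : ℝ :=
  if h : K = 0 then 0
  else orderStat a ⟨K / 2, Nat.div_lt_self (Nat.pos_of_ne_zero h) one_lt_two⟩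

/-- The bucketed mean `X̄_k = (K/N) Σ_{i ∈ B_k} X_i` of the block `B_k`. -/
def blockMean {d N K : ℕ} (X : Fin N → EVec d) (B : Fin K → Finset (Fin N))
    (k : Fin K) : EVec d :=
  ((K : ℝ) / (N : ℝ)) • ∑ i ∈ B k, X i

/-- The Fenchel-Legendre transform of `f` on `S`: `f*_S(μ) = sup_{v ∈ S} (⟨μ,v⟩ - f v)`. -/
def flT {d : ℕ} (S : Set (EVec d)) (f : EVec d → ℝ) (μ : EVec d) : ℝ :=
  ⨆ v : S, ((inner ℝ μ (v : EVec d) : ℝ) - f v)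

/-- The MOM function `g(v) = Med(⟨X̄_k, v⟩ : k ∈ [K])`. -/
def gFun {d K : ℕ} (Xb : Fin K → EVec d) (v : EVec d) : ℝ :=
  med fun k => (inner ℝ (Xb k) v : ℝ)

/-- The interquartile set of ranks `I_K = [(K+1)/4, 3(K+1)/4]`
(1-based ranks; equals `{(K+1)/2 ± j : 0 ≤ j ≤ (K+1)/4}` when `4 ∣ K+1`). -/
def IK (K : ℕ) : Finset (Fin K) :=
  Finset.univ.filter fun k => (K + 1) / 4 ≤ (k : ℕ) + 1 ∧ (k : ℕ) + 1 ≤ 3 * (K + 1) / 4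

/-- `f(v)`: the average of the interquartile order statistics of `(⟨X̄_k, v⟩)_k`. -/
def fFun {d K : ℕ} (Xb : Fin K → EVec d) (v : EVec d) : ℝ :=
  ((IK K).card : ℝ)⁻¹ * ∑ k ∈ IK K, orderStat (fun j => (inner ℝ (Xb j) v : ℝ)) k

/-- The standard Gaussian cumulative distribution function. -/
def Phi (t : ℝ) : ℝ := (gaussianReal 0 1 (Set.Iic t)).toReal

/-- The standard Cauchy distribution on `ℝ`, with density `x ↦ 1/(π(1+x²))`. -/
def stdCauchy : Measure ℝ :=
  MeasureTheory.volume.withDensity fun x => ENNReal.ofReal (Real.pi * (1 + x ^ 2))⁻¹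

end

/-!
Expanding the squares, the `k`-th block risk is `2 ⟪X̄_k - μ, w⟫ - ‖w‖²` with `w = ν - μ`, and
since the median commutes with nondecreasing affine maps, the criterion becomes
`sup_w (2 m(w) - ‖w‖²)` for `m(w) = Med(⟪X̄_k - μ, w⟫)`. For odd `K` the function `m` is
positively homogeneous and odd, so writing `w = t v` with `‖v‖ = 1` and optimising in `t ≥ 0`
gives `(sup_{‖v‖=1} m(v))²`; oddness also makes that supremum nonnegative, so squaring it
preserves the order and both criteria have the same minimizers.
-/

open Finset
open scoped RealInnerProductSpace

section UnitSphere

variable {E : Type*} [NormedAddCommGroup E] {m : E → ℝ}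

lemma iSup_unit_nonneg (hneg : ∀ v, m (-v) = -m v)
    (hbdd : BddAbove (Set.range fun v : {v : E // ‖v‖ = 1} => m v)) :
    0 ≤ ⨆ v : {v : E // ‖v‖ = 1}, m v := by
  rcases isEmpty_or_nonempty {v : E // ‖v‖ = 1} with _ | ⟨⟨v⟩⟩
  · rw [Real.iSup_of_isEmpty]
  · have h₁ := le_ciSup hbdd v
    have h₂ := le_ciSup hbdd ⟨-v, by simp [v.2]⟩
    simp only [hneg] at h₂
    linarith

variable [NormedSpace ℝ E]

lemma le_norm_mul_iSup_unit (hsmul : ∀ t : ℝ, 0 ≤ t → ∀ v, m (t • v) = t * m v)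
    (hbdd : BddAbove (Set.range fun v : {v : E // ‖v‖ = 1} => m v)) (w : E) :
    m w ≤ ‖w‖ * ⨆ v : {v : E // ‖v‖ = 1}, m v := by
  rcases eq_or_ne w 0 with rfl | hw
  · have hm0 : m 0 = 0 := by simpa using hsmul 0 le_rfl 0
    simp [hm0]
  · let u : {v : E // ‖v‖ = 1} := ⟨‖w‖⁻¹ • w, norm_smul_inv_norm hw⟩
    have hwu : m w = ‖w‖ * m u := by
      rw [← hsmul _ (norm_nonneg w), smul_inv_smul₀ (norm_ne_zero_iff.mpr hw)]
    rw [hwu]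
    exact mul_le_mul_of_nonneg_left (le_ciSup hbdd u) (norm_nonneg w)

theorem iSup_two_mul_sub_norm_sq (hsmul : ∀ t : ℝ, 0 ≤ t → ∀ v, m (t • v) = t * m v)
    (hneg : ∀ v, m (-v) = -m v)
    (hbdd : BddAbove (Set.range fun v : {v : E // ‖v‖ = 1} => m v)) :
    ⨆ w : E, (2 * m w - ‖w‖ ^ 2) = (⨆ v : {v : E // ‖v‖ = 1}, m v) ^ 2 := by
  set S := ⨆ v : {v : E // ‖v‖ = 1}, m v
  have hS : 0 ≤ S := iSup_unit_nonneg hneg hbdd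
  have hle (w : E) : 2 * m w - ‖w‖ ^ 2 ≤ S ^ 2 := by
    nlinarith [le_norm_mul_iSup_unit hsmul hbdd w, sq_nonneg (S - ‖w‖)]
  refine le_antisymm (ciSup_le hle) ?_
  set T := ⨆ w : E, (2 * m w - ‖w‖ ^ 2)
  have hbddT : BddAbove (Set.range fun w : E => 2 * m w - ‖w‖ ^ 2) :=
    ⟨S ^ 2, Set.forall_mem_range.2 hle⟩
  have hT : 0 ≤ T := by
    have hm0 : m 0 = 0 := by simpa using hsmul 0 le_rfl 0
    simpa [hm0] using le_ciSup hbddT 0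
  -- evaluate the objective at `w = m v • v`, where it equals `m v ^ 2`
  have hST : S ≤ √T := by
    refine Real.iSup_le (fun v => ?_) (Real.sqrt_nonneg T)
    rcases le_or_gt (m v) 0 with hv | hv
    · exact hv.trans (Real.sqrt_nonneg T)
    · have h := le_ciSup hbddT (m v • (v : E))
      rw [hsmul _ hv.le, norm_smul, v.2, Real.norm_eq_abs, abs_of_pos hv] at h
      exact (Real.le_sqrt hv.le hT).2 (by linarith)
  simpa [Real.sq_sqrt hT] using pow_le_pow_left₀ hS hST 2

end UnitSphere

section Median

variable {K : ℕ}

lemma orderStat_comp_of_monotone (a : Fin K → ℝ) {φ : ℝ → ℝ} (hφ : Monotone φ) :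
    orderStat (fun k => φ (a k)) = fun j => φ (orderStat a j) :=
  ((Tuple.comp_sort_eq_comp_iff_monotone (f := φ ∘ a)).2
    (hφ.comp (Tuple.monotone_sort a))).symm

lemma orderStat_neg (a : Fin K → ℝ) :
    orderStat (fun k => -a k) = fun j => -orderStat a j.rev := by
  have hmono : Monotone ((fun k => -a k) ∘ (Fin.revPerm.trans (Tuple.sort a))) :=
    fun i j hij => neg_le_neg (Tuple.monotone_sort a (Fin.rev_le_rev.2 hij))
  exact (Tuple.comp_sort_eq_comp_iff_monotone.2 hmono).symm

lemma med_comp_of_monotone (hK : K ≠ 0) (a : Fin K → ℝ) {φ : ℝ → ℝ} (hφ : Monotone φ) :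
    med (fun k => φ (a k)) = φ (med a) := by
  simp [med, hK, orderStat_comp_of_monotone a hφ]

lemma med_neg (hK : Odd K) (a : Fin K → ℝ) : med (fun k => -a k) = -med a := by
  obtain ⟨n, rfl⟩ := hK
  simp only [med, orderStat_neg, Nat.add_one_ne_zero, dite_false, neg_inj]
  congr 2
  ext
  simp only [Fin.val_rev]
  omega

lemma med_mem_range (hK : K ≠ 0) (a : Fin K → ℝ) : med a ∈ Set.range a :=
  ⟨Tuple.sort a ⟨K / 2, Nat.div_lt_self (Nat.pos_of_ne_zero hK) one_lt_two⟩,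
    by simp [med, hK, orderStat]⟩

end Median

section MedianInner

variable {E : Type*} [NormedAddCommGroup E] [InnerProductSpace ℝ E] {K : ℕ} (a : Fin K → E)

lemma med_inner_smul (hK : K ≠ 0) {t : ℝ} (ht : 0 ≤ t) (v : E) :
    med (fun k => ⟪a k, t • v⟫) = t * med fun k => ⟪a k, v⟫ := by
  simp only [real_inner_smul_right]
  exact med_comp_of_monotone hK _ (monotone_mul_left_of_nonneg ht)

lemma med_inner_neg (hK : Odd K) (v : E) :
    med (fun k => ⟪a k, -v⟫) = -med fun k => ⟪a k, v⟫ := by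
  simp only [inner_neg_right]
  exact med_neg hK _

lemma bddAbove_med_inner_unit (hK : K ≠ 0) :
    BddAbove (Set.range fun v : {v : E // ‖v‖ = 1} => med fun k => ⟪a k, (v : E)⟫) := by
  refine ⟨∑ k, ‖a k‖, Set.forall_mem_range.2 fun v => ?_⟩
  obtain ⟨k, hk⟩ := med_mem_range hK fun k => ⟪a k, (v : E)⟫
  rw [← hk]
  calc ⟪a k, (v : E)⟫ ≤ ‖a k‖ * ‖(v : E)‖ := real_inner_le_norm _ _
    _ = ‖a k‖ := by rw [v.2, mul_one]
    _ ≤ ∑ j, ‖a j‖ := single_le_sum (fun j _ => norm_nonneg (a j)) (mem_univ k)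

theorem iSup_two_mul_med_inner_sub_norm_sq (hK : Odd K) :
    ⨆ w : E, (2 * (med fun k => ⟪a k, w⟫) - ‖w‖ ^ 2) =
      (⨆ v : {v : E // ‖v‖ = 1}, med fun k => ⟪a k, (v : E)⟫) ^ 2 :=
  iSup_two_mul_sub_norm_sq (fun _ ht v => med_inner_smul a hK.pos.ne' ht v)
    (med_inner_neg a hK) (bddAbove_med_inner_unit a hK.pos.ne')

end MedianInner

lemma mul_sum_norm_sub_sq_sub_norm_sub_sq {E ι : Type*} [NormedAddCommGroup E]
    [InnerProductSpace ℝ E] (s : Finset ι) (x : ι → E) {c : ℝ} (hc : c * #s = 1) (μ ν : E) :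
    c * ∑ i ∈ s, (‖x i - μ‖ ^ 2 - ‖x i - ν‖ ^ 2) =
      2 * ⟪c • ∑ i ∈ s, x i - μ, ν - μ⟫ - ‖ν - μ‖ ^ 2 := by
  have hpt (y : E) : ‖y - μ‖ ^ 2 - ‖y - ν‖ ^ 2 = 2 * ⟪y - μ, ν - μ⟫ - ‖ν - μ‖ ^ 2 := by
    have h := norm_sub_sq_real (y - μ) (ν - μ)
    rw [sub_sub_sub_cancel_right] at h
    linarith
  simp only [hpt, inner_sub_left, real_inner_smul_left, sum_inner, sum_sub_distrib, sum_const,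
    nsmul_eq_mul, ← mul_sum]
  linear_combination (-2 * ⟪μ, ν - μ⟫ - ‖ν - μ‖ ^ 2) * hc

section BlockRisk

variable {d N K : ℕ} (X : Fin N → EVec d) (B : Fin K → Finset (Fin N))

lemma med_blockRisk_eq (hN : 0 < N) (hK : K ≠ 0) (hKN : K ∣ N)
    (hBcard : ∀ k, (B k).card = N / K) (μ ν : EVec d) :
    (med fun k => ((K : ℝ) / (N : ℝ)) * ∑ i ∈ B k, (‖X i - μ‖ ^ 2 - ‖X i - ν‖ ^ 2)) =
      2 * (med fun k => ⟪blockMean X B k - μ, ν - μ⟫) - ‖ν - μ‖ ^ 2 := by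
  have hc (k : Fin K) : ((K : ℝ) / (N : ℝ)) * #(B k) = 1 := by
    rw [hBcard, Nat.cast_div hKN (Nat.cast_ne_zero.2 hK)]
    field_simp [hN.ne']
  simp only [mul_sum_norm_sub_sq_sub_norm_sub_sq _ X (hc _)]
  exact med_comp_of_monotone hK (fun k => ⟪blockMean X B k - μ, ν - μ⟫)
    (φ := fun s => 2 * s - ‖ν - μ‖ ^ 2) fun s t hst => by linarith

theorem iSup_med_blockRisk_eq_sq (hN : 0 < N) (hK : Odd K) (hKN : K ∣ N)
    (hBcard : ∀ k, (B k).card = N / K) (μ : EVec d) :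
    (⨆ ν : EVec d, med fun k =>
        ((K : ℝ) / (N : ℝ)) * ∑ i ∈ B k, (‖X i - μ‖ ^ 2 - ‖X i - ν‖ ^ 2)) =
      (⨆ v : {v : EVec d // ‖v‖ = 1}, med fun k => ⟪blockMean X B k - μ, (v : EVec d)⟫) ^ 2 := by
  simp only [med_blockRisk_eq X B hN hK.pos.ne' hKN hBcard]
  exact ((Equiv.subRight μ).iSup_comp
    (g := fun w => 2 * (med fun k => ⟪blockMean X B k - μ, w⟫) - ‖w‖ ^ 2)).trans
    (iSup_two_mul_med_inner_sub_norm_sq _ hK)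

end BlockRisk

theorem stmt3_general {d N K : ℕ} (hN : 0 < N) (hK : Odd K) (hKN : K ∣ N)
    (X : Fin N → EVec d) (B : Fin K → Finset (Fin N))
    (hBcard : ∀ k, (B k).card = N / K) :
    (∀ μ : EVec d,
        (⨆ ν : EVec d, med fun k =>
            ((K : ℝ) / (N : ℝ)) * ∑ i ∈ B k, (‖X i - μ‖ ^ 2 - ‖X i - ν‖ ^ 2)) =
          (⨆ v : {v : EVec d // ‖v‖ = 1}, med fun k =>
              (inner ℝ (blockMean X B k - μ) (v : EVec d) : ℝ)) ^ 2) ∧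
      {μ : EVec d | ∀ μ' : EVec d,
          (⨆ ν : EVec d, med fun k =>
              ((K : ℝ) / (N : ℝ)) * ∑ i ∈ B k, (‖X i - μ‖ ^ 2 - ‖X i - ν‖ ^ 2)) ≤
            ⨆ ν : EVec d, med fun k =>
              ((K : ℝ) / (N : ℝ)) * ∑ i ∈ B k, (‖X i - μ'‖ ^ 2 - ‖X i - ν‖ ^ 2)} =
        {μ : EVec d | ∀ μ' : EVec d,
            (⨆ v : {v : EVec d // ‖v‖ = 1}, med fun k =>
                (inner ℝ (blockMean X B k - μ) (v : EVec d) : ℝ)) ≤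
              ⨆ v : {v : EVec d // ‖v‖ = 1}, med fun k =>
                (inner ℝ (blockMean X B k - μ') (v : EVec d) : ℝ)} := by
  have key := iSup_med_blockRisk_eq_sq X B hN hK hKN hBcard
  have hnonneg (μ : EVec d) :=
    iSup_unit_nonneg (m := fun v => med fun k => ⟪blockMean X B k - μ, v⟫)
      (med_inner_neg _ hK) (bddAbove_med_inner_unit _ hK.pos.ne')
  refine ⟨key, ?_⟩
  ext μ
  simp only [Set.mem_ofPred_eq, key, pow_le_pow_iff_left₀ (hnonneg _) (hnonneg _) two_ne_zero]

/-- for the quadratic loss `ℓ_μ(x) = ‖x - μ‖₂²` and blocks `B_1, …, B_K`,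
`sup_ν Med(P_{B_k}(ℓ_μ - ℓ_ν)) = (sup_{‖v‖₂=1} Med(⟨X̄_k - μ, v⟩))²` for every `μ`; hence the
minimizers of the minmax MOM criterion are exactly the minimizers of
`μ ↦ sup_{‖v‖₂=1} Med(⟨X̄_k - μ, v⟩)`. -/
theorem stmt3 {d N K : ℕ} (hN : 0 < N) (hK : Odd K) (hKN : K ∣ N)
    (X : Fin N → EVec d) (B : Fin K → Finset (Fin N))
    (hBdisj : ∀ k l : Fin K, k ≠ l → Disjoint (B k) (B l))
    (hBcard : ∀ k, (B k).card = N / K)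
    (hBcover : ∀ i : Fin N, ∃ k, i ∈ B k) :
    (∀ μ : EVec d,
        (⨆ ν : EVec d, med fun k =>
            ((K : ℝ) / (N : ℝ)) * ∑ i ∈ B k, (‖X i - μ‖ ^ 2 - ‖X i - ν‖ ^ 2)) =
          (⨆ v : {v : EVec d // ‖v‖ = 1}, med fun k =>
              (inner ℝ (blockMean X B k - μ) (v : EVec d) : ℝ)) ^ 2) ∧
      {μ : EVec d | ∀ μ' : EVec d,
          (⨆ ν : EVec d, med fun k =>
              ((K : ℝ) / (N : ℝ)) * ∑ i ∈ B k, (‖X i - μ‖ ^ 2 - ‖X i - ν‖ ^ 2)) ≤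
            ⨆ ν : EVec d, med fun k =>
              ((K : ℝ) / (N : ℝ)) * ∑ i ∈ B k, (‖X i - μ'‖ ^ 2 - ‖X i - ν‖ ^ 2)} =
        {μ : EVec d | ∀ μ' : EVec d,
            (⨆ v : {v : EVec d // ‖v‖ = 1}, med fun k =>
                (inner ℝ (blockMean X B k - μ) (v : EVec d) : ℝ)) ≤
              ⨆ v : {v : EVec d // ‖v‖ = 1}, med fun k =>
                (inner ℝ (blockMean X B k - μ') (v : EVec d) : ℝ)} :=
  stmt3_general hN hK hKN X B hBcard
end

section
/- Let S be a nonempty symmetric subset of ℝ^d, K an odd integer, X̄_1,…,X̄_K vectors in ℝ^d, μ* ∈ ℝ^d and R ≥ 0. Define g(v) = Med(⟨X̄_k, v⟩ : k ∈ [K]) and g*_S(μ) = sup_{v∈S}(⟨μ,v⟩ − g(v)). If for every v ∈ S, #{k ∈ [K] : ⟨X̄_k − μ*, v⟩ > R} < K/2, then g*_S(μ*) ≤ R. -/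
open MeasureTheory ProbabilityTheory

/-! Applied to `-v ∈ S`, the hypothesis says that fewer than half of the numbers `⟨X̄_k, v⟩`
lie below `⟨μ*, v⟩ - R`, so their median is at least `⟨μ*, v⟩ - R`, i.e. `⟨μ*, v⟩ - g(v) ≤ R`. -/

lemma le_med_of_two_mul_ncard_lt {K : ℕ} (a : Fin K → ℝ) (c : ℝ)
    (h : 2 * {k : Fin K | a k < c}.ncard < K) : c ≤ med a := by
  have hK : K ≠ 0 := by omega
  rw [med, dif_neg hK]
  by_contra! hlt
  set m : Fin K := ⟨K / 2, Nat.div_lt_self (Nat.pos_of_ne_zero hK) one_lt_two⟩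
  -- the `K / 2 + 1` smallest entries all lie below the median, hence below `c`
  have hsub : Tuple.sort a '' Set.Iic m ⊆ {k : Fin K | a k < c} := by
    rintro _ ⟨j, hj, rfl⟩
    exact (Tuple.monotone_sort a hj).trans_lt hlt
  have hcard : (Tuple.sort a '' Set.Iic m).ncard = K / 2 + 1 := by
    rw [Set.ncard_image_of_injective _ (Equiv.injective _), ← Finset.coe_Iic,
      Set.ncard_coe_finset, Fin.card_Iic]
  have := Set.ncard_le_ncard hsub
  omega

theorem stmt16_general {d K : ℕ}
    (S : Set (EVec d)) (hSne : S.Nonempty) (hSsym : ∀ v ∈ S, -v ∈ S)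
    (Xb : Fin K → EVec d) (μstar : EVec d) (R : ℝ)
    (h : ∀ v ∈ S,
      ({k : Fin K | R < (inner ℝ (Xb k - μstar) v : ℝ)}.ncard : ℝ) < (K : ℝ) / 2) :
    flT S (gFun Xb) μstar ≤ R := by
  have : Nonempty S := hSne.to_subtype
  refine ciSup_le fun ⟨v, hv⟩ => ?_
  have hset : {k : Fin K | R < (inner ℝ (Xb k - μstar) (-v) : ℝ)}
      = {k : Fin K | (inner ℝ (Xb k) v : ℝ) < inner ℝ μstar v - R} := by
    ext k
    simp only [Set.mem_ofPred_eq, inner_neg_right, inner_sub_left]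
    constructor <;> intro hk <;> linarith
  have hfew := h (-v) (hSsym v hv)
  rw [hset, lt_div_iff₀ two_pos] at hfew
  have hmed := le_med_of_two_mul_ncard_lt (fun k => (inner ℝ (Xb k) v : ℝ)) _
    (by exact_mod_cast (mul_comm _ _).trans_lt hfew)
  exact sub_le_comm.mp hmed

/-- if for every `v ∈ S` strictly fewer than `K/2` of the blocks satisfy
`⟨X̄_k - μ*, v⟩ > R`, then `g*_S(μ*) ≤ R`. -/
theorem stmt16 {d K : ℕ} (hK : Odd K)
    (S : Set (EVec d)) (hSne : S.Nonempty) (hSsym : ∀ v ∈ S, -v ∈ S)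
    (Xb : Fin K → EVec d) (μstar : EVec d) (R : ℝ) (hR : 0 ≤ R)
    (h : ∀ v ∈ S,
      ({k : Fin K | R < (inner ℝ (Xb k - μstar) v : ℝ)}.ncard : ℝ) < (K : ℝ) / 2) :
    flT S (gFun Xb) μstar ≤ R :=
  stmt16_general S hSne hSsym Xb μstar R h
end
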